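/- Grading law for nontrivial bimodule relation terms (Lemma 6.5): let (w; b_k, …, b₁, x, a₁, …, a_n) be a weighted input sequence for the AA-bimodule Y. If some single-edge modification of the sequence — a pull (replacing an adjacent pair on one side by its algebra operation value), a push (removing one weight letter w_i from w and inserting the corresponding element: U_i on the A-side for 1 ≤ i ≤ N+1, or U₀ on the B-side for w₀), a differential (replacing some b_m by a term of μ₁(b_m)), or a split (factoring the sequence as a composition of two bimodule operations with weights summing to w) — yields a nonzero bimodule operation (respectively a composition of nonzero bimodule operations), then m(w) + Σ_{i=1}^{n} m(a_i) + Σ_{i=1}^{k} m(b_i) + k + n − 1 = 1. -/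

import Mathlib

open scoped Classical

noncomputable section

namespace StarPaper

/-- The ground ring `R = F₂[V₀, V₁, …, V_{N+1}]`. -/
abbrev R (N : ℕ) := MvPolynomial (Fin (N + 2)) (ZMod 2)

/-- The variable `V₀`. -/
def V0 (N : ℕ) : R N := MvPolynomial.X 0

/-- The variable `V_{i}` for an index `i` counted mod `N` (so `1 ≤ i ≤ N`). -/
def Vof (N : ℕ) (z : ZMod N) : R N := MvPolynomial.X (Fin.ofNat (N + 2) (z.val + 1 : ℕ))

/-- The variable `V_{N+1}`. -/
def VN1 (N : ℕ) : R N := MvPolynomial.X (Fin.ofNat (N + 2) (N + 1 : ℕ))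

/-- The Alexander grading group `ℤ^{2N}`, with coordinates indexed by
`(i, false) ↔ ē_{2i-1}` (the `U`/odd slots) and `(i, true) ↔ ē_{2i}` (the `s`/even slots). -/
abbrev Gr (N : ℕ) := ZMod N × Bool → ℤ

/-- The standard basis vector of the Alexander grading group. -/
def gsl {N : ℕ} (p : ZMod N × Bool) : Gr N := fun x => if x = p then 1 else 0

/-- The constant grading vector `j · Σ_{k=1}^{2N} ē_k`. -/
def constG (N : ℕ) (j : ℕ) : Gr N := fun _ => (j : ℤ)

/-! ### The star algebra `A` -/

/-- Basis words of the star algebra `A`: the idempotents `e_i`, the powers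
`U i p = U_i^{p+1}`, and the words `S i l = s_i s_{i+1} ⋯ s_{i+l}`. -/
inductive AWord (N : ℕ) : Type
  | idem (i : ZMod N)
  | U (i : ZMod N) (p : ℕ)
  | S (i : ZMod N) (l : ℕ)
  deriving DecidableEq

instance (N : ℕ) : Inhabited (AWord N) := ⟨AWord.idem 0⟩

namespace AWord
variable {N : ℕ}

/-- Initial idempotent of a word. -/
def initI : AWord N → ZMod N
  | idem i => i
  | U i _ => i
  | S i _ => i

/-- Final idempotent of a word. -/
def finI : AWord N → ZMod N
  | idem i => i
  | U i _ => i
  | S i l => i + ((l + 1 : ℕ) : ZMod N)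

/-- Multiplication of basis words of `A`; `none` means the product is zero.
This encodes the relations `U_i s_i = 0`, `s_i U_{i+1} = 0`, orthogonality of the
idempotents, and concatenation of `s`-words and of `U`-powers. -/
def mulW : AWord N → AWord N → Option (AWord N)
  | idem i, idem j => if i = j then some (idem i) else none
  | idem i, U j p => if i = j then some (U j p) else none
  | idem i, S j l => if i = j then some (S j l) else none
  | U i p, idem j => if j = i then some (U i p) else none
  | U i p, U j q => if i = j then some (U i (p + q + 1)) else none
  | U _ _, S _ _ => none
  | S i l, idem j => if j = i + ((l + 1 : ℕ) : ZMod N) then some (S i l) else none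
  | S _ _, U _ _ => none
  | S i l, S j m => if j = i + ((l + 1 : ℕ) : ZMod N) then some (S i (l + m + 1)) else none

/-- A word is basic if it is a single generator `U_i` or `s_i`. -/
def isBasic : AWord N → Prop
  | idem _ => False
  | U _ p => p = 0
  | S _ l => l = 0

/-- A word is extended if it is a product of at least two basic generators. -/
def isExt : AWord N → Prop
  | idem _ => False
  | U _ p => 1 ≤ p
  | S _ l => 1 ≤ l

/-- For an extended word `a₁`, the word `a₁'` with `a₁ = a₁' · (basic letter)`. -/
def lTr : AWord N → AWord N
  | idem i => idem i
  | U i p => U i (p - 1)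
  | S i l => S i (l - 1)

/-- For an extended word `a_n`, the word `a_n'` with `a_n = (basic letter) · a_n'`. -/
def rTr : AWord N → AWord N
  | idem i => idem i
  | U i p => U i (p - 1)
  | S i l => S (i + 1) (l - 1)

/-- Is the word an idempotent? -/
def isIdem : AWord N → Prop
  | idem _ => True
  | _ => False

end AWord

/-- The Alexander grading of a word of `A`: `A(U_i) = ē_{2i-1}`, `A(s_i) = ē_{2i}`,
extended additively over the letters of a word. -/
def alexA {N : ℕ} : AWord N → Gr N
  | .idem _ => 0
  | .U i p => ((p : ℤ) + 1) • gsl (i, false)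
  | .S i l => ∑ t ∈ Finset.range (l + 1), gsl ((i + (t : ZMod N), true))

/-- The free `R`-module underlying `A`, with basis the words. -/
abbrev AMod (N : ℕ) := AWord N →₀ R N

/-- A basis word viewed as an element of `A`. -/
def ofA {N : ℕ} (w : AWord N) : AMod N := Finsupp.single w 1

/-- Total Alexander grading of a sequence of words. -/
def alexSum {N : ℕ} (l : List (AWord N)) : Gr N := (l.map alexA).sum

/-- Consecutive idempotents compose. -/
def chainA {N : ℕ} (l : List (AWord N)) : Prop :=
  l.Chain' (fun x y => x.finI = y.initI)

/-- Centered sequence together with its Alexander condition (iv), with parameter `j`. -/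
def centC {N : ℕ} (l : List (AWord N)) (j : ℕ) : Prop :=
  l.headI.isBasic ∧ l.getLastI.isBasic ∧ alexSum l = constG N j

/-- Left-extended sequence together with its Alexander condition (iv), parameter `j`. -/
def leftC {N : ℕ} (l : List (AWord N)) (j : ℕ) : Prop :=
  l.headI.isExt ∧ l.getLastI.isBasic ∧ alexSum l = alexA l.headI.lTr + constG N j

/-- Right-extended sequence together with its Alexander condition (iv), parameter `j`. -/
def rightC {N : ℕ} (l : List (AWord N)) (j : ℕ) : Prop :=
  l.headI.isBasic ∧ l.getLastI.isExt ∧ alexSum l = alexA l.getLastI.rTr + constG N j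

/-- The unweighted operations `μ_n` of `A` on sequences of basis words:
`μ₂` is the multiplication, `μ₀ = μ₁ = 0`, and for `n > 2` the operation is nonzero
exactly when conditions (i)–(iv) hold, with value prescribed by condition (v). -/
def muU (N : ℕ) (l : List (AWord N)) : AMod N :=
  if l.length = 2 then (AWord.mulW l.headI l.getLastI).elim 0 ofA
  else if 2 < l.length ∧ chainA l ∧
      (∃ j, 1 ≤ j ∧ l.length = j * (2 * N - 2) + 2 ∧ (centC l j ∨ leftC l j ∨ rightC l j)) then
    (V0 N ^ ((l.length - 2) / (2 * N - 2))) •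
      (if l.headI.isExt then ofA l.headI.lTr
       else if l.getLastI.isExt then ofA l.getLastI.rTr
       else ofA (.idem l.getLastI.finI))
  else 0

/-! ### Weighted operations on `A` -/

/-- A weight: an `ℕ`-linear combination of the basis weight vectors
`w₁, …, w_N` (the petal weights, indexed mod `N`) and `w_{N+1}` (the central weight). -/
abbrev WtA (N : ℕ) := (ZMod N →₀ ℕ) × ℕ

/-- Total magnitude `|w|` of a weight. -/
def wsize {N : ℕ} (w : WtA N) : ℕ := w.1.sum (fun _ k => k) + w.2

/-- Alexander grading of a weight: `A(w_i) = ē_{2i-1}` for `1 ≤ i ≤ N`,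
`A(w_{N+1}) = Σ_{k=1}^N ē_{2k}`, extended additively. -/
def alexWt {N : ℕ} (w : WtA N) : Gr N :=
  fun x => if x.2 then (w.2 : ℤ) else (w.1 x.1 : ℤ)

/-- Weighted centered condition with parameter `j`. -/
def wCent {N : ℕ} (w : WtA N) (l : List (AWord N)) (j : ℕ) : Prop :=
  alexWt w + alexSum l = constG N j

/-- Weighted left-extended condition: there is a (non-idempotent) offset `α` on the
left end, `a₁ = α·a₁'`, with the corresponding Alexander condition for parameter `j`. -/
def wLeft {N : ℕ} (w : WtA N) (l : List (AWord N)) (j : ℕ) : Prop :=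
  ∃ α : AWord N, ¬ α.isIdem ∧ ∃ a', AWord.mulW α a' = some l.headI ∧
    alexWt w + alexA a' + alexSum l.tail = constG N j

/-- Weighted right-extended condition: offset `α` on the right end, `a_n = a_n'·α`. -/
def wRight {N : ℕ} (w : WtA N) (l : List (AWord N)) (j : ℕ) : Prop :=
  ∃ α : AWord N, ¬ α.isIdem ∧ ∃ a', AWord.mulW a' α = some l.getLastI ∧
    alexWt w + alexSum l.dropLast + alexA a' = constG N j

/-- The element `U_{N+1} = Σ_{i=1}^N s_i s_{i+1} ⋯ s_{i+N-1}`. -/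
def UN1elt (N : ℕ) : AMod N := ∑ i ∈ Finset.range N, ofA (.S (i : ZMod N) (N - 1))

/-- The weighted curvature terms: `μ₀^{w_i} = U_i` for `1 ≤ i ≤ N`,
`μ₀^{w_{N+1}} = U_{N+1}`, and zero for all other weights. -/
def mu0A (N : ℕ) (w : WtA N) : AMod N :=
  if h : ∃ i : ZMod N, w = (Finsupp.single i 1, 0) then ofA (.U h.choose 0)
  else if w = (0, 1) then UN1elt N
  else 0

/-- The combined weighted/unweighted condition (centered, or an offset on exactly
one end) with parameter `j`, as in the definition of the weighted operations. -/
def wCond {N : ℕ} (w : WtA N) (l : List (AWord N)) (j : ℕ) : Prop :=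
  wCent w l j ∨ (wLeft w l j ∧ ¬ wRight w l j) ∨ (wRight w l j ∧ ¬ wLeft w l j)

/-- The weighted operations `μ_n^w` of `A`.  For `w = 0` these are the unweighted
operations; `μ₀^w` is the weighted curvature; and for `w ≠ 0`, `n ≥ 1`, the operation
is nonzero exactly when the conditions of the weighted characterization hold,
with the prescribed value (`V₀^j` times an idempotent in the centered case,
`α·V₀^j` in the extended cases). -/
def muW (N : ℕ) (w : WtA N) (l : List (AWord N)) : AMod N :=
  if w = 0 then muU N l
  else if l = [] then mu0A N w
  else if _h : chainA l ∧ ∃ j, l.length + 2 * wsize w = j * (2 * N - 2) + 2 ∧ wCond w l j then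
    (V0 N ^ ((l.length + 2 * wsize w - 2) / (2 * N - 2))) •
      (if wCent w l ((l.length + 2 * wsize w - 2) / (2 * N - 2)) then
        ofA (.idem l.getLastI.finI)
       else if hl : wLeft w l ((l.length + 2 * wsize w - 2) / (2 * N - 2)) then ofA hl.choose
       else if hr : wRight w l ((l.length + 2 * wsize w - 2) / (2 * N - 2)) then ofA hr.choose
       else 0)
  else 0

/-! ### The dual algebra `B` -/

/-- Basis words of the dual algebra `B`: idempotents `ι_i`, lone letters `ρ_i`, and
strictly alternating words `gen i l r lf` with `l+1` σ-letters `σ_i, …, σ_{i+l}`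
(composed right-to-left), all interior ρ-letters present, an optional right flanking
`ρ_i` (`r`) and an optional left flanking `ρ_{i+l+1}` (`lf`). -/
inductive BWord (N : ℕ) : Type
  | idem (i : ZMod N)
  | rho (i : ZMod N)
  | gen (i : ZMod N) (l : ℕ) (r : Bool) (lf : Bool)
  deriving DecidableEq

instance (N : ℕ) : Inhabited (BWord N) := ⟨BWord.idem 0⟩

namespace BWord
variable {N : ℕ}

/-- Initial (rightmost) idempotent. -/
def initB : BWord N → ZMod N
  | idem i => i
  | rho i => i
  | gen i _ _ _ => i

/-- Final (leftmost) idempotent. -/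
def finB : BWord N → ZMod N
  | idem i => i
  | rho i => i
  | gen i l _ _ => i + ((l + 1 : ℕ) : ZMod N)

/-- The length `ℓ(τ)`: the number of σ-letters. -/
def lenB : BWord N → ℕ
  | gen _ l _ _ => l + 1
  | _ => 0

/-- Right-flanked: the rightmost letter is a `ρ`. -/
def rFl : BWord N → Prop
  | gen _ _ r _ => r = true
  | rho _ => True
  | idem _ => False

/-- Left-flanked: the leftmost letter is a `ρ`. -/
def lFl : BWord N → Prop
  | gen _ _ _ lf => lf = true
  | rho _ => True
  | idem _ => False

/-- Multiplication of basis words of `B` (right-to-left composition, so `mulB x y = x·y`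
with `y` acting first); `none` means the product is zero.  This encodes the relations
`ρρ = 0` and `σσ = 0`. -/
def mulB : BWord N → BWord N → Option (BWord N)
  | idem i, idem j => if i = j then some (idem i) else none
  | idem i, rho j => if i = j then some (rho j) else none
  | idem i, gen j l r lf => if i = j + ((l + 1 : ℕ) : ZMod N) then some (gen j l r lf) else none
  | rho i, idem j => if i = j then some (rho i) else none
  | rho _, rho _ => none
  | rho i, gen j l r lf =>
      if i = j + ((l + 1 : ℕ) : ZMod N) ∧ lf = false then some (gen j l r true) else none
  | gen i l r lf, idem j => if j = i then some (gen i l r lf) else none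
  | gen i l r lf, rho j => if j = i ∧ r = false then some (gen i l true lf) else none
  | gen i' l' r' lf', gen i l r lf =>
      if i' = i + ((l + 1 : ℕ) : ZMod N) ∧ (lf ≠ r') then some (gen i (l + l' + 1) r lf')
      else none

end BWord

/-- The free `R`-module underlying `B`, with basis the words. -/
abbrev BMod (N : ℕ) := BWord N →₀ R N

/-- A basis word viewed as an element of `B`. -/
def ofB {N : ℕ} (w : BWord N) : BMod N := Finsupp.single w 1

/-- The full differential `μ₁` of `B` on basis words: the Leibniz differential
(`μ₁ρ_i = V_i`, `μ₁σ_i = 0`; only flanking ρ-letters contribute) for length `< N`,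
together with the window-cutting terms in the length `≥ N` cases, according to the
four flanking cases. -/
def mu1W (N : ℕ) : BWord N → BMod N
  | .idem _ => 0
  | .rho i => Vof N i • ofB (.idem i)
  | .gen i l r lf =>
      (if r then Vof N i • ofB (.gen i l false lf) else 0)
      + (if lf then Vof N (i + ((l + 1 : ℕ) : ZMod N)) • ofB (.gen i l r false) else 0)
      + (if N ≤ l + 1 ∧ lf = false then
          (VN1 N * ∏ t ∈ Finset.range (N - 1), Vof N (i + ((l + 2 - N + t : ℕ) : ZMod N))) •
            (if N ≤ l then ofB (.gen i (l - N) r true)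
             else if r then ofB (.rho i) else ofB (.idem i))
         else 0)
      + (if N ≤ l + 1 ∧ r = false then
          (VN1 N * ∏ t ∈ Finset.range (N - 1), Vof N (i + ((t + 1 : ℕ) : ZMod N))) •
            (if N ≤ l then ofB (.gen (i + (N : ZMod N)) (l - N) true lf)
             else if lf then ofB (.rho (i + (N : ZMod N))) else ofB (.idem (i + (N : ZMod N))))
         else 0)

/-- The differential `μ₁`, extended `R`-linearly to all of `B`. -/
def mu1M (N : ℕ) (x : BMod N) : BMod N := x.sum fun w c => c • mu1W N w

/-- Total length of a composable sequence of words (the list is written in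
composition order `[τ₁, …, τ_k]`). -/
def totB {N : ℕ} (l : List (BWord N)) : ℕ := (l.map BWord.lenB).sum

/-- Consecutive inputs compose (`(τ_k, …, τ₁)` is written `[τ₁, …, τ_k]`). -/
def chainB {N : ℕ} (l : List (BWord N)) : Prop :=
  l.Chain' (fun x y => x.finB = y.initB)

/-- Condition (S1): some proper top part `(τ_k, …, τ_m)`, `m > 1`, has total length `≥ N`. -/
def S1 (N : ℕ) (l : List (BWord N)) : Prop :=
  ∃ m, 1 ≤ m ∧ m < l.length ∧ N ≤ totB (l.drop m)

/-- Condition (S2): some proper bottom part `(τ_m, …, τ₁)`, `m < k`, has total length `≥ N`. -/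
def S2 (N : ℕ) (l : List (BWord N)) : Prop :=
  ∃ m, 1 ≤ m ∧ m < l.length ∧ N ≤ totB (l.take m)

/-- The product of the variables `V_λ` over the interior ρ-letters of a word. -/
def intProd (N : ℕ) : BWord N → R N
  | .gen i l _ _ => ∏ t ∈ Finset.range l, Vof N (i + ((t + 1 : ℕ) : ZMod N))
  | _ => 1

/-- Shape conditions on the terms of an allowable sequence: interior terms begin and
end with a σ-letter, `τ₁` begins with a σ (possibly ending with a ρ), and `τ_k` ends
with a σ (possibly beginning with a ρ). -/
def endsOK (N : ℕ) (l : List (BWord N)) : Prop :=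
  (∃ i li r, l.headI = BWord.gen i li r false) ∧
  (∃ i li lf, l.getLastI = BWord.gen i li false lf) ∧
  (∀ m, 0 < m → m + 1 < l.length → ∃ i li, l[m]? = some (BWord.gen i li false false))

/-- Allowable sequences (for the high-length products `μ_k`, `2 ≤ k ≤ N`). -/
def allow (N : ℕ) (l : List (BWord N)) : Prop :=
  2 ≤ l.length ∧ l.length ≤ N ∧ chainB l ∧ N ≤ totB l ∧
  ¬(S1 N l ∧ S2 N l) ∧
  ¬(l.getLastI.lFl ∧ S2 N l ∧ ¬ S1 N l) ∧
  ¬(l.headI.rFl ∧ S1 N l ∧ ¬ S2 N l) ∧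
  ¬(l.getLastI.lFl ∧ l.headI.rFl) ∧
  endsOK N l

/-- The bottom-cut term: the window of the bottom `N` σ-steps is swept out and
converted into `V_{N+1}·∏{V_λ}`, leaving the remaining top factor of `τ_k`. -/
def botTerm (N : ℕ) (l : List (BWord N)) : BMod N :=
  match l.getLastI with
  | .gen ik lk _ lfk =>
    if 1 ≤ N - totB l.dropLast ∧ N - totB l.dropLast ≤ lk then
      (VN1 N * ((l.dropLast.map (intProd N)).prod) *
        ∏ t ∈ Finset.range (N - totB l.dropLast - 1), Vof N (ik + ((t + 1 : ℕ) : ZMod N))) •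
        ofB (.gen (ik + ((N - totB l.dropLast : ℕ) : ZMod N)) (lk - (N - totB l.dropLast))
              true lfk)
    else 0
  | _ => 0

/-- The top-cut term: the window of the top `N` σ-steps is swept out, leaving the
remaining bottom factor of `τ₁`. -/
def topTerm (N : ℕ) (l : List (BWord N)) : BMod N :=
  match l.headI with
  | .gen i1 l1 r1 _ =>
    if 1 ≤ N - totB l.tail ∧ N - totB l.tail ≤ l1 then
      (VN1 N * ((l.tail.map (intProd N)).prod) *
        ∏ t ∈ Finset.range (N - totB l.tail - 1),
          Vof N (i1 + ((l1 + 1 - (N - totB l.tail) + t + 1 : ℕ) : ZMod N))) •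
        ofB (.gen i1 (l1 - (N - totB l.tail)) r1 true)
    else 0
  | _ => 0

/-- The value of a high-length product on an allowable sequence: for total length `N`
there is a single cut; for total length `> N`, the sum of the bottom-cut and top-cut
terms over the permitted cut directions (never counting from a flanked or
stretching-too-far end). -/
def highVal (N : ℕ) (l : List (BWord N)) : BMod N :=
  if totB l = N then
    (VN1 N * (l.map (intProd N)).prod) •
      ofB (if l.getLastI.lFl ∨ l.headI.rFl then BWord.rho l.headI.initB
           else BWord.idem l.headI.initB)
  else
    (if ¬ S2 N l ∧ ¬ l.headI.rFl then botTerm N l else 0)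
    + (if ¬ S1 N l ∧ ¬ l.getLastI.lFl then topTerm N l else 0)

/-- The operations `μ_k` of `B` on sequences of basis words (the list is in composition
order `[τ₁, …, τ_k]`): `μ₁` is the full differential, `μ₂` is the concatenation product
together with the high-length binary products, `μ_k` for `2 ≤ k ≤ N` the high-length
products on allowable sequences, and all other operations vanish. -/
def muB (N : ℕ) (l : List (BWord N)) : BMod N :=
  if l.length = 1 then mu1W N l.headI
  else if 2 ≤ l.length then
    (if l.length = 2 then (BWord.mulB l.getLastI l.headI).elim 0 ofB else 0)
    + (if allow N l then highVal N l else 0)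
  else 0

/-! ### Gradings -/

/-- Maslov grading of a basis word of `B` (`m(ρ_i) = m(σ_i) = -1`). -/
def mB {N : ℕ} : BWord N → ℤ
  | .idem _ => 0
  | .rho _ => -1
  | .gen _ l r lf => -(2 * (l : ℤ) + 1) - (if r then 1 else 0) - (if lf then 1 else 0)

/-- Alexander grading of a basis word of `B` (`A(ρ_i) = ē_{2i-1}`, `A(σ_i) = ē_{2i}`). -/
def alexB {N : ℕ} : BWord N → Gr N
  | .idem _ => 0
  | .rho i => gsl (i, false)
  | .gen i l r lf =>
      (∑ t ∈ Finset.range (l + 1), gsl ((i + (t : ZMod N), true)))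
      + (∑ t ∈ Finset.range l, gsl ((i + ((t + 1 : ℕ) : ZMod N), false)))
      + (if r then gsl (i, false) else 0)
      + (if lf then gsl ((i + ((l + 1 : ℕ) : ZMod N), false)) else 0)

/-- Maslov grading of a variable: `m(V₀) = 2N-2`, `m(V_i) = -2` for `1 ≤ i ≤ N+1`. -/
def mdegVar (N : ℕ) (idx : Fin (N + 2)) : ℤ :=
  if (idx : ℕ) = 0 then 2 * (N : ℤ) - 2 else -2

/-- Maslov grading of a monomial in the variables `V₀, …, V_{N+1}`. -/
def mdeg (N : ℕ) (v : Fin (N + 2) →₀ ℕ) : ℤ := v.sum fun idx e => (e : ℤ) * mdegVar N idx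

/-- Alexander grading of a variable. -/
def alexVar (N : ℕ) (idx : Fin (N + 2)) : Gr N :=
  if (idx : ℕ) = 0 then (fun _ => 1)
  else if (idx : ℕ) = N + 1 then (fun x => if x.2 then 1 else 0)
  else gsl (((((idx : ℕ) - 1 : ℕ)) : ZMod N), false)

/-- Alexander grading of a monomial in the variables. -/
def alexMon (N : ℕ) (v : Fin (N + 2) →₀ ℕ) : Gr N :=
  v.sum fun idx e => (e : ℤ) • alexVar N idx

/-! ### The AA-bimodule `Y` -/

/-- Monomials in the variables `V₀, …, V_{N+1}` (exponent vectors). -/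
abbrev Mon (N : ℕ) := Fin (N + 2) →₀ ℕ

/-- An input on the `A`-side: a monomial `V`-factor together with a basis word of `A`
(these are exactly the `F₂`-basis elements of `A`). -/
abbrev AInp (N : ℕ) := Mon N × AWord N

/-- An input on the `B`-side. -/
abbrev BInp (N : ℕ) := Mon N × BWord N

/-- A weight for the bimodule `Y`: `(q, pet, top)` records `q` copies of `w₀`,
the petal multiplicities of `w₁, …, w_N`, and the multiplicity of `w_{N+1}`. -/
abbrev Wt (N : ℕ) := ℕ × (ZMod N →₀ ℕ) × ℕ

/-- The bimodule `Y` over `F₂`: free on the generators `x₁, …, x_N` (indexed mod `N`). -/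
abbrev YF (N : ℕ) := ZMod N →₀ ZMod 2

/-- `A` as an `F₂`-vector space with basis the decorated words. -/
abbrev AF (N : ℕ) := AInp N →₀ ZMod 2

/-- `B` as an `F₂`-vector space with basis the decorated words. -/
abbrev BF (N : ℕ) := BInp N →₀ ZMod 2

/-- Maslov grading of a bimodule weight: `m(w₀) = -(2N-2)`, `m(w_i) = 2`. -/
def mWt (N : ℕ) (w : Wt N) : ℤ :=
  -(2 * (N : ℤ) - 2) * w.1 + 2 * (w.2.1.sum fun _ k => (k : ℤ)) + 2 * w.2.2

/-- Alexander grading of a bimodule weight: `A(w₀) = Σ_{k=1}^{2N} ē_k`,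
`A(w_i) = ē_{2i-1}`, `A(w_{N+1}) = Σ ē_{2k}`. -/
def alexWt3 (N : ℕ) (w : Wt N) : Gr N :=
  fun x => if x.2 then ((w.1 : ℤ) + (w.2.2 : ℤ)) else ((w.1 : ℤ) + (w.2.1 x.1 : ℤ))

/-- `A`-side letters of a weighted input sequence: the basic letters of the `a`-inputs
(`V`-factors included as letters `V_idx`) together with the weight letters
`w₁, …, w_{N+1}`. -/
inductive ASide (N : ℕ)
  | uL (i : ZMod N)
  | sL (i : ZMod N)
  | vL (idx : Fin (N + 2))
  | wPet (i : ZMod N)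
  | wTop
  deriving DecidableEq

/-- `B`-side letters: the basic letters of the `b`-inputs (`V`-factors included)
together with the weight letters `w₀`. -/
inductive BSide (N : ℕ)
  | rL (i : ZMod N)
  | gL (i : ZMod N)
  | vL (idx : Fin (N + 2))
  | w0
  deriving DecidableEq

/-- Which pairs of letters the matching may pair: the pairing preserves the Alexander
grading, never pairs a weight letter with a weight letter, pairs each `V_i`-letter only
with the weight `w_i`, and pairs each weight `w_i` (`1 ≤ i ≤ N`) only with a `V_i`- or
`ρ_i`-letter and `w₀`, `w_{N+1}` only with `V₀`-, `V_{N+1}`-letters respectively. -/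
def compat {N : ℕ} : ASide N → BSide N → Prop
  | .uL i, .rL j => i = j
  | .sL i, .gL j => i = j
  | .vL idx, .w0 => (idx : ℕ) = 0
  | .wPet i, .rL j => i = j
  | .wPet i, .vL idx => (idx : ℕ) = i.val + 1
  | .wTop, .vL idx => (idx : ℕ) = N + 1
  | _, _ => False

/-- The `V`-letters of a monomial factor (`A`-side). -/
def monLettersA (N : ℕ) (v : Mon N) : List (ASide N) :=
  (List.finRange (N + 2)).flatMap fun idx => List.replicate (v idx) (ASide.vL idx)

/-- The basic letters of a word of `A`, in order. -/
def wordLettersA {N : ℕ} : AWord N → List (ASide N)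
  | .idem _ => []
  | .U i p => List.replicate (p + 1) (ASide.uL i)
  | .S i l => (List.range (l + 1)).map fun t => ASide.sL (i + (t : ZMod N))

/-- All `A`-side letters of an `A`-input. -/
def lettersA {N : ℕ} (a : AInp N) : List (ASide N) := monLettersA N a.1 ++ wordLettersA a.2

/-- The `V`-letters of a monomial factor (`B`-side). -/
def monLettersB (N : ℕ) (v : Mon N) : List (BSide N) :=
  (List.finRange (N + 2)).flatMap fun idx => List.replicate (v idx) (BSide.vL idx)

/-- The basic letters of a word of `B`, in (right-to-left) order. -/
def wordLettersB {N : ℕ} : BWord N → List (BSide N)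
  | .idem _ => []
  | .rho i => [BSide.rL i]
  | .gen i l r lf =>
      (if r then [BSide.rL i] else []) ++
      ((List.range (l + 1)).flatMap fun t =>
        (if t = 0 then [] else [BSide.rL (i + (t : ZMod N))]) ++ [BSide.gL (i + (t : ZMod N))]) ++
      (if lf then [BSide.rL (i + ((l + 1 : ℕ) : ZMod N))] else [])

/-- All `B`-side letters of a `B`-input. -/
def lettersB {N : ℕ} (b : BInp N) : List (BSide N) := monLettersB N b.1 ++ wordLettersB b.2

/-- Algebra-letter part of an `A`-side letter (weight letters are dropped). -/
def algA {N : ℕ} : ASide N → Option (ASide N)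
  | .wPet _ => none
  | .wTop => none
  | x => some x

/-- Algebra-letter part of a `B`-side letter. -/
def algB {N : ℕ} : BSide N → Option (BSide N)
  | .w0 => none
  | x => some x

/-- The weighted input sequence admits a matching: there is a common list of compatible
pairs whose `A`-side algebra letters are exactly those of the `a`-inputs in order, whose
`A`-side weight letters are exactly those of the weight, and similarly on the `B`-side
(so the pairing restricts to order-preserving maps on the algebra letters of each side). -/
def admitsMatching (N : ℕ) (w : Wt N) (bs : List (BInp N)) (as : List (AInp N)) : Prop :=
  ∃ E : List (ASide N × BSide N),
    (∀ pr ∈ E, compat pr.1 pr.2) ∧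
    E.filterMap (fun pr => algA pr.1) = (as.map lettersA).flatten ∧
    (∀ i : ZMod N, (E.map Prod.fst).count (ASide.wPet i) = w.2.1 i) ∧
    ((E.map Prod.fst).count ASide.wTop = w.2.2) ∧
    E.filterMap (fun pr => algB pr.2) = (bs.map lettersB).flatten ∧
    ((E.map Prod.snd).count BSide.w0 = w.1)

/-- Idempotent conditions on the `A`-side. -/
def idemOKA {N : ℕ} (x : ZMod N) (as : List (AInp N)) : Prop :=
  (as.map (fun a => a.2)).Chain' (fun u v => u.finI = v.initI) ∧
  (as = [] ∨ (as.headI.2.initI = x))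

/-- Idempotent conditions on the `B`-side. -/
def idemOKB {N : ℕ} (x : ZMod N) (bs : List (BInp N)) : Prop :=
  (bs.map (fun b => b.2)).Chain' (fun u v => u.finB = v.initB) ∧
  (bs = [] ∨ (bs.headI.2.initB = x))

/-- Final idempotent of the `A`-side (the idempotent of the output generator). -/
def finIA {N : ℕ} (x : ZMod N) (as : List (AInp N)) : ZMod N :=
  if as = [] then x else as.getLastI.2.finI

/-- Final idempotent of the `B`-side. -/
def finIB {N : ℕ} (x : ZMod N) (bs : List (BInp N)) : ZMod N :=
  if bs = [] then x else bs.getLastI.2.finB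

/-- The bimodule operation `m^w_{k|n}(b_k, …, b₁, x, a₁, …, a_n)` of `Y` (the input
lists are written bottom-up, `as = [a₁, …, a_n]` and `bs = [b₁, …, b_k]`): it equals the
generator `y` of `Y` in the common final idempotent exactly when (i) the idempotents
match up, (ii) `m(w) + Σ m(aᵢ) + Σ m(bᵢ) + k + n - 1 = 0`, and (iii) the total Alexander
grading vanishes mod `2` and the weighted input sequence admits a matching; and is zero
otherwise. -/
def mval (N : ℕ) (w : Wt N) (bs : List (BInp N)) (x : ZMod N) (as : List (AInp N)) :
    YF N :=
  if (idemOKA x as ∧ idemOKB x bs ∧ finIA x as = finIB x bs) ∧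
     (mWt N w + ((as.map fun a : AInp N => mdeg N a.1).sum) + ((bs.map fun b : BInp N => mdeg N b.1 + mB b.2).sum)
        + (bs.length : ℤ) + (as.length : ℤ) - 1 = 0) ∧
     (∀ p, (alexWt3 N w p + ((as.map fun a : AInp N => alexMon N a.1 + alexA a.2).sum) p
            + ((bs.map fun b : BInp N => alexMon N b.1 + alexB b.2).sum) p) % 2 = 0) ∧
     admitsMatching N w bs as
  then Finsupp.single (finIA x as) 1 else 0

/-- The weighted operations of `A` on decorated words (the `V`-decorations are central
and factor out); the result is expressed in the decorated-word basis of `A` over `F₂`.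
Weights containing a copy of `w₀` give the zero operation on `A`. -/
def decMuA (N : ℕ) (w2 : Wt N) (seg : List (AInp N)) : AF N :=
  if w2.1 = 0 then
    (muW N (w2.2.1, w2.2.2) (seg.map Prod.snd)).sum fun wrd poly =>
      (AddMonoidAlgebra.coeff poly).sum fun mon c => Finsupp.single (((seg.map Prod.fst).sum + mon, wrd)) c
  else 0

/-- The element `U₀` of `B` in the decorated-word basis. -/
def U0dec (N : ℕ) : BF N :=
  (∑ i ∈ Finset.range N,
    Finsupp.single ((0 : Mon N), BWord.gen (i : ZMod N) (N - 1) false true) (1 : ZMod 2))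
  + ∑ i ∈ Finset.range N,
    Finsupp.single ((0 : Mon N), BWord.gen (i : ZMod N) (N - 1) true false) (1 : ZMod 2)

/-- The operations of `B` on decorated words: the unweighted operations `μ_k` with the
decorations factored out, together with the weighted curvature `μ₀^{w₀} = U₀`; all other
weighted operations of `B` vanish. -/
def decMuB (N : ℕ) (w2 : Wt N) (seg : List (BInp N)) : BF N :=
  if w2 = 0 then
    (muB N (seg.map Prod.snd)).sum fun wrd poly =>
      (AddMonoidAlgebra.coeff poly).sum fun mon c => Finsupp.single (((seg.map Prod.fst).sum + mon, wrd)) c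
  else if w2 = ((1 : ℕ), (0 : ZMod N →₀ ℕ), (0 : ℕ)) ∧ seg = [] then U0dec N
  else 0

/-- The single-edge modifications of a weighted input sequence
`(w; b_k, …, b₁, x, a₁, …, a_n)` of the bimodule `Y`: pulls (replacing an adjacent pair
on one side by its algebra operation value), pushes (removing a weight letter `w_i` from
`w` and inserting `U_i` on the `A`-side for `1 ≤ i ≤ N+1`, or removing `w₀` and
inserting `U₀` on the `B`-side), differentials (replacing some `b_m` by a term of
`μ₁(b_m)`), and splits (factorizations as a composition of two bimodule operations with
weights summing to `w`). -/
inductive EdgeMod (N : ℕ)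
  | pullA (m : ℕ)
  | pullB (m : ℕ)
  | pushPet (i : ZMod N) (p : ℕ)
  | pushTop (p : ℕ)
  | pushW0 (p : ℕ)
  | diffB (m : ℕ) (mon : Mon N) (wrd : BWord N)
  | split (w2 : Wt N) (q p : ℕ)

/-- The value resulting from a single-edge modification. -/
def emv (N : ℕ) (w : Wt N) (bs : List (BInp N)) (x : ZMod N) (as : List (AInp N)) :
    EdgeMod N → YF N
  | .pullA m =>
    match as[m]?, as[m+1]? with
    | some a, some b =>
      (match AWord.mulW a.2 b.2 with
       | some c => mval N w bs x (as.take m ++ (a.1 + b.1, c) :: as.drop (m + 2))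
       | none => 0)
    | _, _ => 0
  | .pullB m =>
    match bs[m]?, bs[m+1]? with
    | some a, some b =>
      (decMuB N 0 [a, b]).sum fun bi c =>
        c • mval N w (bs.take m ++ bi :: bs.drop (m + 2)) x as
    | _, _ => 0
  | .pushPet i p =>
    if 1 ≤ w.2.1 i ∧ p ≤ as.length then
      mval N (w.1, w.2.1 - Finsupp.single i 1, w.2.2) bs x
        (as.take p ++ ((0 : Mon N), AWord.U i 0) :: as.drop p)
    else 0
  | .pushTop p =>
    if 1 ≤ w.2.2 ∧ p ≤ as.length then
      ∑ i ∈ Finset.range N,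
        mval N (w.1, w.2.1, w.2.2 - 1) bs x
          (as.take p ++ ((0 : Mon N), AWord.S (i : ZMod N) (N - 1)) :: as.drop p)
    else 0
  | .pushW0 p =>
    if 1 ≤ w.1 ∧ p ≤ bs.length then
      (U0dec N).sum fun bi c =>
        c • mval N (w.1 - 1, w.2.1, w.2.2) (bs.take p ++ bi :: bs.drop p) x as
    else 0
  | .diffB m mon wrd =>
    match bs[m]? with
    | some b =>
      if mon ∈ ((mu1W N b.2) wrd).support then
        mval N w (bs.take m ++ (b.1 + mon, wrd) :: bs.drop (m + 1)) x as
      else 0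
    | none => 0
  | .split w2 q p =>
    if w2.1 ≤ w.1 ∧ w2.2.1 ≤ w.2.1 ∧ w2.2.2 ≤ w.2.2 ∧ q ≤ bs.length ∧ p ≤ as.length then
      (mval N w2 (bs.take q) x (as.take p)).sum fun y c =>
        c • mval N (w.1 - w2.1, w.2.1 - w2.2.1, w.2.2 - w2.2.2) (bs.drop q) y (as.drop p)
    else 0

/-!
Every algebra operation involved is homogeneous for the Maslov grading: `μ₂` of `A` and of
`B` are additive, `μ₁` of `B` lowers the grading by one, `U_i` has grading `0 = m(w_i) - 2`
and `U₀` has grading `-2N = m(w₀) - 2`. Writing `m_op = m(w) + Σ m(aᵢ) + Σ m(bᵢ) + k + n - 1`,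
each single-edge modification therefore produces inputs whose `m_op` is that of the original
minus one (for a split, the two `m_op` add up to it minus one). A nonzero operation of `Y` has
`m_op = 0`, so the original sequence has `m_op = 1`.
-/
lemma _root_.List.drop_eq_cons_of_getElem?_eq_some {α : Type*} {l : List α} {m : ℕ} {a : α}
    (h : l[m]? = some a) : l.drop m = a :: l.drop (m + 1) := by
  obtain ⟨hm, rfl⟩ := List.getElem?_eq_some_iff.mp h
  exact List.drop_eq_getElem_cons hm

lemma _root_.List.eq_take_append_cons_drop {α : Type*} {l : List α} {m : ℕ} {a : α}
    (h : l[m]? = some a) : l = l.take m ++ a :: l.drop (m + 1) := by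
  rw [← List.drop_eq_cons_of_getElem?_eq_some h, List.take_append_drop]

lemma _root_.List.eq_take_append_cons_cons_drop {α : Type*} {l : List α} {m : ℕ} {a b : α}
    (ha : l[m]? = some a) (hb : l[m + 1]? = some b) :
    l = l.take m ++ a :: b :: l.drop (m + 2) := by
  rw [← List.drop_eq_cons_of_getElem?_eq_some hb, ← List.drop_eq_cons_of_getElem?_eq_some ha,
    List.take_append_drop]

section

open MvPolynomial

variable {N : ℕ}

lemma mdeg_eq_weight (v : Mon N) : mdeg N v = Finsupp.weight (mdegVar N) v := by
  simp only [mdeg, Finsupp.weight_apply, nsmul_eq_mul]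

lemma mdeg_add (u v : Mon N) : mdeg N (u + v) = mdeg N u + mdeg N v := by
  simp only [mdeg_eq_weight, map_add]

lemma mdeg_zero : mdeg N 0 = 0 := by
  simp only [mdeg_eq_weight, map_zero]

lemma isWeightedHomogeneous_X_of_ne_zero {idx : Fin (N + 2)} (h : (idx : ℕ) ≠ 0) :
    (X idx : R N).IsWeightedHomogeneous (mdegVar N) (-2) := by
  simpa [mdegVar, h] using isWeightedHomogeneous_X (ZMod 2) (mdegVar N) idx

lemma isWeightedHomogeneous_Vof [NeZero N] (z : ZMod N) :
    (Vof N z).IsWeightedHomogeneous (mdegVar N) (-2) :=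
  isWeightedHomogeneous_X_of_ne_zero <| by
    rw [Fin.val_ofNat, Nat.mod_eq_of_lt (by have := z.val_lt; omega)]; omega

lemma isWeightedHomogeneous_VN1 : (VN1 N).IsWeightedHomogeneous (mdegVar N) (-2) :=
  isWeightedHomogeneous_X_of_ne_zero <| by rw [Fin.val_ofNat, Nat.mod_eq_of_lt (by omega)]; omega

lemma isWeightedHomogeneous_prod_Vof [NeZero N] (m : ℕ) (f : ℕ → ZMod N) :
    (∏ t ∈ Finset.range m, Vof N (f t)).IsWeightedHomogeneous (mdegVar N) (-2 * m) := by
  simpa [mul_comm] using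
    IsWeightedHomogeneous.prod (Finset.range m) _ _ fun t _ => isWeightedHomogeneous_Vof (f t)

lemma isWeightedHomogeneous_window [NeZero N] (f : ℕ → ZMod N) :
    (VN1 N * ∏ t ∈ Finset.range (N - 1), Vof N (f t)).IsWeightedHomogeneous (mdegVar N)
      (-2 * N) := by
  convert isWeightedHomogeneous_VN1.mul (isWeightedHomogeneous_prod_Vof (N - 1) f) using 1
  rw [Nat.cast_sub NeZero.one_le]; ring

lemma isWeightedHomogeneous_intProd [NeZero N] (i : ZMod N) (l : ℕ) (r lf : Bool) :
    (intProd N (.gen i l r lf)).IsWeightedHomogeneous (mdegVar N) (-2 * l) :=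
  isWeightedHomogeneous_prod_Vof l _

def IsMaslovHomogeneous (p : BMod N) (δ : ℤ) : Prop :=
  ∀ τ, (p τ).IsWeightedHomogeneous (mdegVar N) (δ - mB τ)

namespace IsMaslovHomogeneous

variable {p q : BMod N} {δ : ℤ}

lemma zero : IsMaslovHomogeneous (0 : BMod N) δ :=
  fun _ => isWeightedHomogeneous_zero _ _ _

lemma add (hp : IsMaslovHomogeneous p δ) (hq : IsMaslovHomogeneous q δ) :
    IsMaslovHomogeneous (p + q) δ :=
  fun τ => (hp τ).add (hq τ)

lemma ite_zero {P : Prop} [Decidable P] (h : P → IsMaslovHomogeneous p δ) :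
    IsMaslovHomogeneous (if P then p else 0) δ := by
  split_ifs with hP
  exacts [h hP, zero]

lemma smul_ofB {c : R N} {d : ℤ} {σ : BWord N} (hc : c.IsWeightedHomogeneous (mdegVar N) d)
    (hd : d + mB σ = δ) : IsMaslovHomogeneous (c • ofB σ) δ := by
  intro τ
  rw [Finsupp.smul_apply, ofB, Finsupp.single_apply]
  split_ifs with h
  · subst h
    simpa [← hd] using hc
  · simpa using isWeightedHomogeneous_zero (ZMod 2) (mdegVar N) _

end IsMaslovHomogeneous

open IsMaslovHomogeneous

lemma isMaslovHomogeneous_ofB (σ : BWord N) : IsMaslovHomogeneous (ofB σ) (mB σ) := by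
  simpa using
    smul_ofB (c := 1) (isWeightedHomogeneous_one (ZMod 2) (mdegVar N)) (zero_add (mB σ))

lemma isMaslovHomogeneous_mu1W [NeZero N] :
    ∀ τ : BWord N, IsMaslovHomogeneous (mu1W N τ) (mB τ - 1)
  | .idem _ => zero
  | .rho i => smul_ofB (isWeightedHomogeneous_Vof i) (by simp [mB])
  | .gen i l r lf => by
    refine ((add ?_ ?_).add ?_).add ?_ <;> refine ite_zero fun h => ?_
    · exact smul_ofB (isWeightedHomogeneous_Vof i) (by simp [mB, h]; ring)
    · exact smul_ofB (isWeightedHomogeneous_Vof _) (by simp [mB, h]; ring)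
    all_goals
      split_ifs <;> refine smul_ofB (isWeightedHomogeneous_window _) ?_ <;>
        cases r <;> cases lf <;> simp_all [mB] <;> omega

lemma mB_eq_of_mulB_eq_some {σ τ υ : BWord N} (h : BWord.mulB σ τ = some υ) :
    mB υ = mB σ + mB τ := by
  cases σ <;> cases τ <;> simp only [BWord.mulB] at h <;> (try split_ifs at h) <;> cases h <;>
    simp_all [mB] <;> split_ifs <;> (try simp_all) <;> omega

lemma isMaslovHomogeneous_highVal_pair [NeZero N] {u v : BWord N} (h : allow N [u, v]) :
    IsMaslovHomogeneous (highVal N [u, v]) (mB u + mB v) := by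
  obtain ⟨-, -, -, -, -, -, -, hflank, ⟨i₁, l₁, r₁, hu⟩, ⟨i₂, l₂, lf₂, hv⟩, -⟩ := h
  simp only [List.headI, List.getLastI] at hu hv
  subst hu hv
  simp only [List.headI, List.getLastI, BWord.lFl, BWord.rFl] at hflank
  have hu := isWeightedHomogeneous_intProd i₁ l₁ r₁ false
  have hv := isWeightedHomogeneous_intProd i₂ l₂ false lf₂
  have h1 := isWeightedHomogeneous_one (ZMod 2) (mdegVar N)
  simp only [highVal, botTerm, topTerm, totB, List.map_cons, List.map_nil, List.sum_cons,
    List.sum_nil, List.prod_cons, List.prod_nil, List.getLastI, List.headI, List.dropLast,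
    List.tail, BWord.lenB, BWord.lFl, BWord.rFl, BWord.initB]
  split
  · split_ifs <;> refine smul_ofB (isWeightedHomogeneous_VN1.mul (hu.mul (hv.mul h1))) ?_ <;>
      cases r₁ <;> cases lf₂ <;> simp_all [mB] <;> omega
  · refine add (ite_zero fun hr => ite_zero fun _ => ?_)
      (ite_zero fun hlf => ite_zero fun _ => ?_)
    · refine smul_ofB ((isWeightedHomogeneous_VN1.mul (hu.mul h1)).mul
        (isWeightedHomogeneous_prod_Vof _ _)) ?_
      simp [mB, hr.2]; omega
    · refine smul_ofB ((isWeightedHomogeneous_VN1.mul (hv.mul h1)).mul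
        (isWeightedHomogeneous_prod_Vof _ _)) ?_
      simp [mB, hlf.2]; omega

lemma isMaslovHomogeneous_muB_pair [NeZero N] (u v : BWord N) :
    IsMaslovHomogeneous (muB N [u, v]) (mB u + mB v) := by
  simp only [muB, List.length_cons, List.length_nil, List.getLastI, List.headI]
  refine add ?_ (ite_zero isMaslovHomogeneous_highVal_pair)
  cases hmul : BWord.mulB v u with
  | none => exact zero
  | some υ => simpa [add_comm, mB_eq_of_mulB_eq_some hmul] using isMaslovHomogeneous_ofB υ

lemma IsMaslovHomogeneous.mdeg_add_mB {p : BMod N} {δ : ℤ} (h : IsMaslovHomogeneous p δ)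
    {τ : BWord N} {mon : Mon N} (hmon : mon ∈ (p τ).support) : mdeg N mon + mB τ = δ := by
  rw [mdeg_eq_weight, h τ (mem_support_iff.mp hmon), sub_add_cancel]

def mBInp (b : BInp N) : ℤ := mdeg N b.1 + mB b.2

lemma mBInp_of_mem_support_decMuB_pair [NeZero N] {a b y : BInp N}
    (hy : y ∈ (decMuB N 0 [a, b]).support) : mBInp y = mBInp a + mBInp b := by
  rw [decMuB, if_pos rfl] at hy
  obtain ⟨τ, -, hτ⟩ := Finset.mem_biUnion.mp (Finsupp.support_sum hy)
  obtain ⟨mon, hmon, hy⟩ := Finset.mem_biUnion.mp (Finsupp.support_sum hτ)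
  rw [Finset.mem_singleton.mp (Finsupp.support_single_subset hy)]
  have := (isMaslovHomogeneous_muB_pair a.2 b.2).mdeg_add_mB hmon
  simp only [mBInp, List.map_cons, List.map_nil, List.sum_cons, List.sum_nil, add_zero, mdeg_add]
  linarith

lemma mBInp_of_mem_support_U0dec [NeZero N] {y : BInp N} (hy : y ∈ (U0dec N).support) :
    mBInp y = -2 * N := by
  have hN : 1 ≤ N := NeZero.one_le
  rcases Finset.mem_union.mp (Finsupp.support_add hy) with h | h <;>
  · obtain ⟨i, -, hi⟩ := Finset.mem_biUnion.mp (Finsupp.support_finsetSum h)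
    rw [Finset.mem_singleton.mp (Finsupp.support_single_subset hi)]
    simp [mBInp, mB, mdeg_zero]
    omega

lemma mBInp_of_mem_support_mu1W [NeZero N] {b : BInp N} {τ : BWord N} {mon : Mon N}
    (hmon : mon ∈ (mu1W N b.2 τ).support) : mBInp (b.1 + mon, τ) = mBInp b - 1 := by
  have := (isMaslovHomogeneous_mu1W b.2).mdeg_add_mB hmon
  simp only [mBInp, mdeg_add]
  linarith

lemma mWt_add (w w' : Wt N) : mWt N (w + w') = mWt N w + mWt N w' := by
  simp only [mWt, Prod.fst_add, Prod.snd_add, Nat.cast_add]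
  rw [Finsupp.sum_add_index' (by simp) (by intros; push_cast; ring)]
  ring

lemma mWt_sub {w w' : Wt N} (h : w' ≤ w) : mWt N (w - w') = mWt N w - mWt N w' := by
  rw [eq_sub_iff_add_eq, ← mWt_add, tsub_add_cancel_of_le h]

lemma mWt_sub_petal {w : Wt N} {i : ZMod N} (h : 1 ≤ w.2.1 i) :
    mWt N (w.1, w.2.1 - Finsupp.single i 1, w.2.2) = mWt N w - 2 := by
  have := mWt_sub (w := w) (w' := (0, Finsupp.single i 1, 0))
    ⟨zero_le, Finsupp.single_le_iff.mpr h, zero_le⟩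
  simpa [mWt] using this

lemma mWt_sub_top {w : Wt N} (h : 1 ≤ w.2.2) :
    mWt N (w.1, w.2.1, w.2.2 - 1) = mWt N w - 2 := by
  simpa [mWt] using mWt_sub (w := w) (w' := (0, 0, 1)) ⟨zero_le, zero_le, h⟩

lemma mWt_sub_w0 {w : Wt N} (h : 1 ≤ w.1) :
    mWt N (w.1 - 1, w.2.1, w.2.2) = mWt N w + (2 * N - 2) := by
  have := mWt_sub (w := w) (w' := (1, 0, 0)) ⟨h, zero_le, zero_le⟩
  simp [mWt] at this ⊢
  linarith

def mOp (N : ℕ) (w : Wt N) (bs : List (BInp N)) (as : List (AInp N)) : ℤ :=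
  mWt N w + (as.map fun a : AInp N => mdeg N a.1).sum + (bs.map mBInp).sum
    + (bs.length : ℤ) + (as.length : ℤ) - 1

lemma mOp_eq_zero_of_mval_ne_zero {w : Wt N} {bs : List (BInp N)} {x : ZMod N}
    {as : List (AInp N)} (h : mval N w bs x as ≠ 0) : mOp N w bs as = 0 := by
  rw [mval] at h
  split_ifs at h with hc
  · exact hc.2.1
  · exact absurd rfl h

section mOp

variable (w : Wt N) (bs : List (BInp N)) (as : List (AInp N))

lemma mOp_append_cons_as (pre post : List (AInp N)) (a : AInp N) :
    mOp N w bs (pre ++ a :: post) = mOp N w bs (pre ++ post) + mdeg N a.1 + 1 := by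
  simp only [mOp, List.map_append, List.map_cons, List.sum_append, List.sum_cons,
    List.length_append, List.length_cons]
  push_cast; ring

lemma mOp_append_cons_bs (pre post : List (BInp N)) (b : BInp N) :
    mOp N w (pre ++ b :: post) as = mOp N w (pre ++ post) as + mBInp b + 1 := by
  simp only [mOp, List.map_append, List.map_cons, List.sum_append, List.sum_cons,
    List.length_append, List.length_cons]
  push_cast; ring

lemma mOp_change_weight (w' : Wt N) :
    mOp N w' bs as = mOp N w bs as + mWt N w' - mWt N w := by
  simp only [mOp]; ring

lemma mOp_take_add_mOp_drop (w₁ w₂ : Wt N) (hw : mWt N w = mWt N w₁ + mWt N w₂)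
    (q p : ℕ) :
    mOp N w₁ (bs.take q) (as.take p) + mOp N w₂ (bs.drop q) (as.drop p)
      = mOp N w bs as - 1 := by
  conv_rhs => rw [← List.take_append_drop q bs, ← List.take_append_drop p as]
  simp only [mOp, List.map_append, List.sum_append, List.length_append, hw]
  push_cast; ring

end mOp

variable {w : Wt N} {bs : List (BInp N)} {x : ZMod N} {as : List (AInp N)}

lemma mOp_eq_one_of_pullA {m : ℕ} (he : emv N w bs x as (.pullA m) ≠ 0) :
    mOp N w bs as = 1 := by
  simp only [emv] at he
  split at he
  · rename_i a b ha hb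
    split at he
    · have hmod := mOp_eq_zero_of_mval_ne_zero he
      rw [mOp_append_cons_as, mdeg_add] at hmod
      rw [List.eq_take_append_cons_cons_drop ha hb, mOp_append_cons_as, mOp_append_cons_as]
      linarith
    · exact absurd rfl he
  · exact absurd rfl he

lemma mOp_eq_one_of_pullB [NeZero N] {m : ℕ} (he : emv N w bs x as (.pullB m) ≠ 0) :
    mOp N w bs as = 1 := by
  simp only [emv] at he
  split at he
  · rename_i a b ha hb
    obtain ⟨y, hy, hne⟩ := Finset.exists_ne_zero_of_sum_ne_zero he
    have hmod := mOp_eq_zero_of_mval_ne_zero (right_ne_zero_of_smul hne)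
    rw [mOp_append_cons_bs, mBInp_of_mem_support_decMuB_pair hy] at hmod
    rw [List.eq_take_append_cons_cons_drop ha hb, mOp_append_cons_bs, mOp_append_cons_bs]
    linarith
  · exact absurd rfl he

lemma mOp_eq_one_of_pushPet {i : ZMod N} {p : ℕ} (he : emv N w bs x as (.pushPet i p) ≠ 0) :
    mOp N w bs as = 1 := by
  simp only [emv] at he
  split_ifs at he with hcond
  · have hmod := mOp_eq_zero_of_mval_ne_zero he
    rw [mOp_append_cons_as, List.take_append_drop, mOp_change_weight w,
      mWt_sub_petal hcond.1, mdeg_zero] at hmod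
    linarith
  · exact absurd rfl he

lemma mOp_eq_one_of_pushTop {p : ℕ} (he : emv N w bs x as (.pushTop p) ≠ 0) :
    mOp N w bs as = 1 := by
  simp only [emv] at he
  split_ifs at he with hcond
  · obtain ⟨i, -, hne⟩ := Finset.exists_ne_zero_of_sum_ne_zero he
    have hmod := mOp_eq_zero_of_mval_ne_zero hne
    rw [mOp_append_cons_as, List.take_append_drop, mOp_change_weight w,
      mWt_sub_top hcond.1, mdeg_zero] at hmod
    linarith
  · exact absurd rfl he

lemma mOp_eq_one_of_pushW0 [NeZero N] {p : ℕ} (he : emv N w bs x as (.pushW0 p) ≠ 0) :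
    mOp N w bs as = 1 := by
  simp only [emv] at he
  split_ifs at he with hcond
  · obtain ⟨y, hy, hne⟩ := Finset.exists_ne_zero_of_sum_ne_zero he
    have hmod := mOp_eq_zero_of_mval_ne_zero (right_ne_zero_of_smul hne)
    rw [mOp_append_cons_bs, List.take_append_drop, mOp_change_weight w,
      mWt_sub_w0 hcond.1, mBInp_of_mem_support_U0dec hy] at hmod
    linarith
  · exact absurd rfl he

lemma mOp_eq_one_of_diffB [NeZero N] {m : ℕ} {mon : Mon N} {τ : BWord N}
    (he : emv N w bs x as (.diffB m mon τ) ≠ 0) : mOp N w bs as = 1 := by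
  simp only [emv] at he
  split at he
  · rename_i b hb
    split_ifs at he with hmon
    · have hmod := mOp_eq_zero_of_mval_ne_zero he
      rw [mOp_append_cons_bs, mBInp_of_mem_support_mu1W hmon] at hmod
      rw [List.eq_take_append_cons_drop hb, mOp_append_cons_bs]
      linarith
    · exact absurd rfl he
  · exact absurd rfl he

lemma mOp_eq_one_of_split {w₂ : Wt N} {q p : ℕ} (he : emv N w bs x as (.split w₂ q p) ≠ 0) :
    mOp N w bs as = 1 := by
  simp only [emv] at he
  split_ifs at he with hcond
  · obtain ⟨h1, h2, h3, -, -⟩ := hcond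
    obtain ⟨y, hy, hne⟩ := Finset.exists_ne_zero_of_sum_ne_zero he
    have hfirst := mOp_eq_zero_of_mval_ne_zero (Finsupp.support_nonempty_iff.mp ⟨y, hy⟩)
    have hsecond : mOp N (w - w₂) (bs.drop q) (as.drop p) = 0 :=
      mOp_eq_zero_of_mval_ne_zero (right_ne_zero_of_smul hne)
    have hw : mWt N w = mWt N w₂ + mWt N (w - w₂) := by
      rw [mWt_sub ⟨h1, h2, h3⟩]; ring
    have := mOp_take_add_mOp_drop w bs as w₂ (w - w₂) hw q p
    linarith
  · exact absurd rfl he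

end

/-- Grading law for nontrivial bimodule relation terms (Lemma 6.5):
if some single-edge modification of the weighted input sequence
`(w; b_k, …, b₁, x, a₁, …, a_n)` yields a nonzero bimodule operation (resp. a
composition of nonzero bimodule operations), then
`m(w) + Σ m(aᵢ) + Σ m(bᵢ) + k + n - 1 = 1`. -/
theorem grading_of_nontrivial_terms (N : ℕ) (hN : 3 ≤ N) (w : Wt N)
    (bs : List (BInp N)) (x : ZMod N) (as : List (AInp N))
    (e : EdgeMod N) (he : emv N w bs x as e ≠ 0) :
    mWt N w + ((as.map fun a : AInp N => mdeg N a.1).sum)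
      + ((bs.map fun b : BInp N => mdeg N b.1 + mB b.2).sum)
      + (bs.length : ℤ) + (as.length : ℤ) - 1 = 1 := by
  have : NeZero N := ⟨by omega⟩
  change mOp N w bs as = 1
  cases e with
  | pullA _ => exact mOp_eq_one_of_pullA he
  | pullB _ => exact mOp_eq_one_of_pullB he
  | pushPet _ _ => exact mOp_eq_one_of_pushPet he
  | pushTop _ => exact mOp_eq_one_of_pushTop he
  | pushW0 _ => exact mOp_eq_one_of_pushW0 he
  | diffB _ _ _ => exact mOp_eq_one_of_diffB he
  | split _ _ _ => exact mOp_eq_one_of_split he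

end StarPaper
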